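/- arXiv:1605.09112 — 4 statements merged into one kernel-verified Lean document; each statement's English description precedes it below -/
import Mathlib

section
/- Let F : ℝ → [0,1] be a right-continuous, increasing function, let r ∈ ℝ and c ≥ 0, and define G(u) = F(r - c·u) - 1 + u for u ∈ [0,1]. Then G has at least one zero in [0,1], and the set of zeros of G in [0,1] has a maximum. -/
/-!
The zeros of `G` in `[0,1]` are exactly the fixed points of `ψ u = 1 - F (r - c * u)`.
Since `F` is increasing with values in `[0,1]` and `c ≥ 0`, `ψ` is a monotone self-map of the
complete lattice `[0,1]`, so by Knaster–Tarski its fixed points have a greatest element.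
-/

open Set

theorem MonotoneOn.exists_isGreatest_fixedPoint_Icc {α : Type*} [ConditionallyCompleteLattice α]
    {a b : α} (hab : a ≤ b) {f : α → α} (hf : MonotoneOn f (Icc a b))
    (hmaps : MapsTo f (Icc a b) (Icc a b)) :
    ∃ u, IsGreatest {x ∈ Icc a b | f x = x} u := by
  have : Fact (a ≤ b) := ⟨hab⟩
  let g : Icc a b →o Icc a b := ⟨hmaps.restrict f _ _, fun x y hxy => hf x.2 y.2 hxy⟩
  obtain ⟨hfix, hgreatest⟩ := g.isGreatest_gfp
  refine ⟨g.gfp, ⟨g.gfp.2, congrArg Subtype.val hfix⟩, fun x ⟨hx, hfx⟩ => ?_⟩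
  exact hgreatest (a := ⟨x, hx⟩) (Subtype.ext hfx)

theorem stmt0_general (F : ℝ → ℝ) (r c : ℝ) (hc : 0 ≤ c)
    (hF01 : ∀ y, F y ∈ Set.Icc (0:ℝ) 1)
    (hFmono : Monotone F)
    (G : ℝ → ℝ) (hG : ∀ u, G u = F (r - c * u) - 1 + u) :
    ∃ u ∈ Set.Icc (0:ℝ) 1, G u = 0 ∧ ∀ v ∈ Set.Icc (0:ℝ) 1, G v = 0 → v ≤ u := by
  set ψ : ℝ → ℝ := fun u => 1 - F (r - c * u)
  have hzero_iff : ∀ u, G u = 0 ↔ ψ u = u := fun u => by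
    simp only [ψ, hG]
    constructor <;> intro h <;> linarith
  have hψ_mono : MonotoneOn ψ (Icc 0 1) := fun u _ v _ huv => by
    have := hFmono (sub_le_sub_left (mul_le_mul_of_nonneg_left huv hc) r)
    simp only [ψ]
    linarith
  have hψ_maps : MapsTo ψ (Icc 0 1) (Icc 0 1) := fun u _ => by
    obtain ⟨h0, h1⟩ := hF01 (r - c * u)
    constructor <;> simp only [ψ] <;> linarith
  obtain ⟨u, ⟨hu, hψu⟩, hmax⟩ := hψ_mono.exists_isGreatest_fixedPoint_Icc zero_le_one hψ_maps
  exact ⟨u, hu, (hzero_iff u).2 hψu, fun v hv hGv => hmax ⟨hv, (hzero_iff v).1 hGv⟩⟩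

/-- For a right-continuous, increasing `F : ℝ → [0,1]`, `r ∈ ℝ`, `c ≥ 0`,
the function `G u = F (r - c·u) - 1 + u` has a zero in `[0,1]`, and the set of zeros
of `G` in `[0,1]` has a maximum. -/
theorem stmt0 (F : ℝ → ℝ) (r c : ℝ) (hc : 0 ≤ c)
    (hF01 : ∀ y, F y ∈ Set.Icc (0:ℝ) 1)
    (hFmono : Monotone F)
    (hFrc : ∀ y : ℝ, ContinuousWithinAt F (Set.Ici y) y)
    (G : ℝ → ℝ) (hG : ∀ u, G u = F (r - c * u) - 1 + u) :
    ∃ u ∈ Set.Icc (0:ℝ) 1, G u = 0 ∧ ∀ v ∈ Set.Icc (0:ℝ) 1, G v = 0 → v ≤ u :=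
  stmt0_general F r c hc hF01 hFmono G hG
end

section
/- Let (F_t)_{t≥0} with F_t : ℝ → [0,1] continuous and increasing in y, decreasing in t, and such that t ↦ F_t(y) is right-continuous for each y. Fix r ∈ ℝ, c ≥ 0, and let ρ(t) ∈ [0,1] be the maximal solution of 1 - u = F_t(r - c·u). Then t ↦ ρ(t) is right-continuous. -/
/-!
Raising the time parameter only lowers `F`, so by the intermediate value theorem every solution
at an earlier time lies below some solution at a later time: the maximal solution `ρ` is
monotone and has a right limit `L` at every `t`. Since `F` is monotone in space, decreasing in
time and right-continuous in time, it is jointly right-continuous, so `L` solves the equation at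
time `t`; maximality of `ρ t` then forces `L = ρ t`.
-/

open Set Filter Topology Function

def solutionSet (f : ℝ → ℝ) (r c : ℝ) : Set ℝ :=
  {u | u ∈ Icc 0 1 ∧ 1 - u = f (r - c * u)}

theorem le_of_mem_solutionSet_of_mem_upperBounds {f g : ℝ → ℝ} {r c a b : ℝ}
    (hg : Continuous g) (hg₀ : ∀ y, 0 ≤ g y) (hgf : ∀ y, g y ≤ f y)
    (ha : a ∈ solutionSet f r c) (hb : b ∈ upperBounds (solutionSet g r c)) : a ≤ b := by
  obtain ⟨v, ⟨hav, hv1⟩, hv⟩ : ∃ v ∈ Icc a 1, 1 - g (r - c * v) - v = 0 :=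
    intermediate_value_Icc' ha.1.2 (by fun_prop)
      ⟨by linarith [hg₀ (r - c * 1)], by linarith [ha.2, hgf (r - c * a)]⟩
  exact hav.trans (hb ⟨⟨ha.1.1.trans hav, hv1⟩, by linarith⟩)

theorem monotoneOn_of_isGreatest_solutionSet {α : Type*} [Preorder α] {s : Set α}
    {F : α → ℝ → ℝ} {ρ : α → ℝ} {r c : ℝ}
    (hF₀ : ∀ t ∈ s, ∀ y, 0 ≤ F t y) (hFcont : ∀ t ∈ s, Continuous (F t))
    (hFanti : ∀ t₁ ∈ s, ∀ t₂ ∈ s, t₁ ≤ t₂ → F t₂ ≤ F t₁)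
    (hρ : ∀ t ∈ s, IsGreatest (solutionSet (F t) r c) (ρ t)) : MonotoneOn ρ s :=
  fun _ h₁ _ h₂ h₁₂ => le_of_mem_solutionSet_of_mem_upperBounds (hFcont _ h₂)
    (hF₀ _ h₂) (hFanti _ h₁ _ h₂ h₁₂) (hρ _ h₁).1 (hρ _ h₂).2

theorem tendsto_uncurry_nhdsGE_prod_nhds {α : Type*} [TopologicalSpace α] [Preorder α]
    {F : α → ℝ → ℝ} {t : α} {y : ℝ}
    (hmono : ∀ s ≥ t, Monotone (F s)) (hle : ∀ s ≥ t, F s ≤ F t)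
    (hcont : ContinuousAt (F t) y)
    (hright : ∀ y', ContinuousWithinAt (fun s => F s y') (Ici t) t) :
    Tendsto (uncurry F) (𝓝[≥] t ×ˢ 𝓝 y) (𝓝 (F t y)) := by
  refine tendsto_order.2 ⟨fun a ha => ?_, fun b hb => ?_⟩
  · have hleft : ∀ᶠ y₀ in 𝓝[<] y, a < F t y₀ :=
      (hcont.mono_left nhdsWithin_le_nhds).eventually (lt_mem_nhds ha)
    obtain ⟨y₀, hay₀, hy₀⟩ := (hleft.and self_mem_nhdsWithin).exists
    filter_upwards [prod_mem_prod (inter_mem ((hright y₀).eventually (lt_mem_nhds hay₀))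
      self_mem_nhdsWithin) (Ioi_mem_nhds hy₀)] with ⟨s, y'⟩ ⟨⟨has, hts⟩, hy'⟩
    exact has.trans_le (hmono s hts (le_of_lt hy'))
  · filter_upwards [prod_mem_prod self_mem_nhdsWithin (hcont.eventually (gt_mem_nhds hb))]
      with ⟨s, y'⟩ ⟨hts, hy'⟩
    exact (hle s hts y').trans_lt hy'

theorem stmt3_general (F : ℝ → ℝ → ℝ) (r c : ℝ)
    (hF01 : ∀ t, 0 ≤ t → ∀ y, F t y ∈ Set.Icc (0:ℝ) 1)
    (hFcont : ∀ t, 0 ≤ t → Continuous (F t))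
    (hFmono : ∀ t, 0 ≤ t → Monotone (F t))
    (hFdec : ∀ s t, 0 ≤ s → s ≤ t → ∀ y, F t y ≤ F s y)
    (hFrc : ∀ y, ∀ t, 0 ≤ t → ContinuousWithinAt (fun s => F s y) (Set.Ici t) t)
    (ρ : ℝ → ℝ)
    (hρ : ∀ t, 0 ≤ t → ρ t ∈ Set.Icc (0:ℝ) 1 ∧ 1 - ρ t = F t (r - c * ρ t) ∧
      ∀ u ∈ Set.Icc (0:ℝ) 1, 1 - u = F t (r - c * u) → u ≤ ρ t) :
    ∀ t, 0 ≤ t → ContinuousWithinAt ρ (Set.Ici t) t := by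
  intro t ht
  have hsol (s : ℝ) (hs : 0 ≤ s) : IsGreatest (solutionSet (F s) r c) (ρ s) :=
    ⟨⟨(hρ s hs).1, (hρ s hs).2.1⟩, fun u hu => (hρ s hs).2.2 u hu.1 hu.2⟩
  have hmono : MonotoneOn ρ (Ici 0) := monotoneOn_of_isGreatest_solutionSet
    (fun s hs y => (hF01 s hs y).1) hFcont (fun s₁ hs₁ s₂ _ h y => hFdec s₁ s₂ hs₁ h y) hsol
  have hIoi : Ioi t ⊆ Ici 0 := fun s hs => ht.trans (le_of_lt hs)
  have hpos : ∀ᶠ s in 𝓝[>] t, 0 ≤ s := eventually_nhdsWithin_of_forall hIoi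
  obtain ⟨L, hL⟩ : ∃ L, Tendsto ρ (𝓝[>] t) (𝓝 L) := ⟨_, (hmono.mono hIoi).tendsto_nhdsGT
    ⟨0, forall_mem_image.2 fun s hs => (hρ s (hIoi hs)).1.1⟩⟩
  have hpair : Tendsto (fun s => (s, r - c * ρ s)) (𝓝[>] t) (𝓝[≥] t ×ˢ 𝓝 (r - c * L)) :=
    (tendsto_nhdsWithin_mono_left Ioi_subset_Ici_self tendsto_id).prodMk
      (tendsto_const_nhds.sub (tendsto_const_nhds.mul hL))
  have hFL : Tendsto (fun s => F s (r - c * ρ s)) (𝓝[>] t) (𝓝 (F t (r - c * L))) :=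
    (tendsto_uncurry_nhdsGE_prod_nhds (fun s hs => hFmono s (ht.trans hs))
      (fun s hs => hFdec t s ht hs) (hFcont t ht).continuousAt (hFrc · t ht)).comp hpair
  have hLsol : L ∈ solutionSet (F t) r c :=
    ⟨isClosed_Icc.mem_of_tendsto hL (hpos.mono fun s hs => (hρ s hs).1),
      tendsto_nhds_unique (hL.const_sub 1) (hFL.congr' (hpos.mono fun s hs => (hρ s hs).2.1.symm))⟩
  have hρL : ρ t = L := le_antisymm
    (ge_of_tendsto hL (eventually_nhdsWithin_of_forall fun s hs => hmono ht (hIoi hs) hs.le))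
    ((hsol t ht).2 hLsol)
  rw [← continuousWithinAt_Ioi_iff_Ici, ContinuousWithinAt, hρL]
  exact hL

/-- If in addition `t ↦ F_t(y)` is right-continuous for every `y`, then the
maximal solution `ρ(t)` of `1 - u = F_t (r - c·u)` is right-continuous in `t`. -/
theorem stmt3 (F : ℝ → ℝ → ℝ) (r c : ℝ) (hc : 0 ≤ c)
    (hF01 : ∀ t, 0 ≤ t → ∀ y, F t y ∈ Set.Icc (0:ℝ) 1)
    (hFcont : ∀ t, 0 ≤ t → Continuous (F t))
    (hFmono : ∀ t, 0 ≤ t → Monotone (F t))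
    (hFdec : ∀ s t, 0 ≤ s → s ≤ t → ∀ y, F t y ≤ F s y)
    (hFrc : ∀ y, ∀ t, 0 ≤ t → ContinuousWithinAt (fun s => F s y) (Set.Ici t) t)
    (ρ : ℝ → ℝ)
    (hρ : ∀ t, 0 ≤ t → ρ t ∈ Set.Icc (0:ℝ) 1 ∧ 1 - ρ t = F t (r - c * ρ t) ∧
      ∀ u ∈ Set.Icc (0:ℝ) 1, 1 - u = F t (r - c * u) → u ≤ ρ t) :
    ∀ t, 0 ≤ t → ContinuousWithinAt ρ (Set.Ici t) t :=
  stmt3_general F r c hF01 hFcont hFmono hFdec hFrc ρ hρ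
end

section
/- Let (Ω,F,P) be a probability space with a right-continuous filtration G, let E be an exponentially distributed (rate 1) random variable independent of G_∞, let γ ≥ 0 be a G-progressively measurable, locally integrable process, and let θ = inf{t : ∫₀^t γ_s ds = E}. Then for any finite G-stopping time τ, P[θ > τ | G_τ] = exp(-∫₀^τ γ_s ds) almost surely. -/
open MeasureTheory ProbabilityTheory

/-!
Write `Γ_t = ∫₀ᵗ γ_s ds`. Since `t ↦ Γ_t` is continuous and nondecreasing, `θ > τ` holds
exactly when `Γ_τ < E` (outside the null event `E < 0`). The process `Γ` is continuous and
adapted, hence progressive, so `Γ_τ` is `G_τ`-measurable, while `E` is independent of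
`G_τ ≤ G_∞`. Freezing `Γ_τ` then gives `P[Γ_τ < E | G_τ] = P[x < E]|_{x = Γ_τ} = exp (-Γ_τ)`.
-/

lemma continuous_intervalIntegral_zero {f : ℝ → ℝ}
    (hf : ∀ t, IntervalIntegrable f volume 0 t) :
    Continuous fun t => ∫ u in (0:ℝ)..t, f u :=
  intervalIntegral.continuous_primitive (fun a b => (hf a).symm.trans (hf b)) 0

lemma monotone_intervalIntegral_zero {f : ℝ → ℝ} (hf0 : ∀ u, 0 ≤ f u)
    (hf : ∀ t, IntervalIntegrable f volume 0 t) :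
    Monotone fun t => ∫ u in (0:ℝ)..t, f u := by
  intro a b hab
  show (∫ u in (0:ℝ)..a, f u) ≤ ∫ u in (0:ℝ)..b, f u
  have hdiff : (∫ u in (0:ℝ)..b, f u) - ∫ u in (0:ℝ)..a, f u = ∫ u in a..b, f u :=
    intervalIntegral.integral_interval_sub_left (hf b) (hf a)
  linarith [intervalIntegral.integral_nonneg (μ := volume) hab fun u _ => hf0 u]

lemma ofReal_lt_sInf_hittingTime_iff {f : ℝ → ℝ} (hf0 : ∀ u, 0 ≤ f u)
    (hf : ∀ t, IntervalIntegrable f volume 0 t) {e t : ℝ} (he : 0 ≤ e) (ht : 0 ≤ t) :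
    ENNReal.ofReal t < sInf (ENNReal.ofReal '' {s | 0 ≤ s ∧ ∫ u in (0:ℝ)..s, f u = e})
      ↔ ∫ u in (0:ℝ)..t, f u < e := by
  set A : ℝ → ℝ := fun s => ∫ u in (0:ℝ)..s, f u with hAdef
  have hA : Continuous A := continuous_intervalIntegral_zero hf
  have hAmono : Monotone A := monotone_intervalIntegral_zero hf0 hf
  constructor
  · intro hlt
    by_contra! hge
    have hmem : e ∈ Set.Icc (A 0) (A t) := ⟨by simpa [hAdef] using he, hge⟩
    obtain ⟨s, hs, hAs⟩ := intermediate_value_Icc ht hA.continuousOn hmem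
    have hsF : s ∈ {s | 0 ≤ s ∧ A s = e} := ⟨hs.1, hAs⟩
    exact (hlt.trans_le ((sInf_le (Set.mem_image_of_mem _ hsF)).trans
      (ENNReal.ofReal_le_ofReal hs.2))).false
  · intro hlt
    -- a margin is needed for the strict inequality: by continuity, `A < e` still at some `t' > t`
    obtain ⟨t', hAt', htt'⟩ := (((hA.tendsto t).eventually (gt_mem_nhds hlt)).filter_mono
      nhdsWithin_le_nhds |>.and (self_mem_nhdsWithin (s := Set.Ioi t))).exists
    refine ((ENNReal.ofReal_lt_ofReal_iff (ht.trans_lt htt')).2 htt').trans_le (le_sInf ?_)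
    rintro _ ⟨s, ⟨-, hAs⟩, rfl⟩
    refine ENNReal.ofReal_le_ofReal (le_of_not_ge fun hst => ?_)
    linarith [hAmono hst, show A s = e from hAs]

lemma stronglyMeasurable_intervalIntegral_of_Iic {Ω : Type*} [MeasurableSpace Ω]
    {γ : ℝ → Ω → ℝ} {t : ℝ} (hγ : StronglyMeasurable fun p : Set.Iic t × Ω => γ p.1 p.2)
    (ht : 0 ≤ t) :
    StronglyMeasurable fun ω => ∫ u in (0:ℝ)..t, γ u ω := by
  have hext : StronglyMeasurable fun p : ℝ × Ω => γ (min p.1 t) p.2 :=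
    hγ.comp_measurable
      (g := fun p : ℝ × Ω => ((⟨min p.1 t, min_le_right p.1 t⟩ : Set.Iic t), p.2))
      ((measurable_fst.min measurable_const).subtype_mk.prodMk measurable_snd)
  convert hext.integral_prod_left' (μ := volume.restrict (Set.Ioc 0 t)) using 2 with ω
  rw [intervalIntegral.integral_of_le ht]
  exact setIntegral_congr_fun measurableSet_Ioc fun u hu => by simp [min_eq_left hu.2]

section Progressive

variable {Ω : Type*} {m0 : MeasurableSpace Ω} {G : Filtration ℝ m0} {γ : ℝ → Ω → ℝ}

lemma isStronglyProgressive_intervalIntegral_zero_max (hγ : IsStronglyProgressive G γ)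
    (hint : ∀ ω t, IntervalIntegrable (fun s => γ s ω) volume 0 t) :
    IsStronglyProgressive G fun t ω => ∫ u in (0:ℝ)..(max t 0), γ u ω := by
  refine StronglyAdapted.isStronglyProgressive_of_continuous (fun t => ?_) fun ω =>
    (continuous_intervalIntegral_zero (hint ω)).comp (continuous_id.max continuous_const)
  rcases le_total 0 t with ht | ht
  · simpa only [max_eq_left ht] using
      @stronglyMeasurable_intervalIntegral_of_Iic Ω (G t) γ t (hγ t) ht
  · simpa only [max_eq_right ht, intervalIntegral.integral_same] using stronglyMeasurable_const

lemma measurable_intervalIntegral_stoppingTime (hγ : IsStronglyProgressive G γ)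
    (hint : ∀ ω t, IntervalIntegrable (fun s => γ s ω) volume 0 t) {τ : Ω → ℝ}
    (hτ : IsStoppingTime G fun ω => (τ ω : WithTop ℝ)) (hτ0 : ∀ ω, 0 ≤ τ ω) :
    Measurable[hτ.measurableSpace] fun ω => ∫ u in (0:ℝ)..(τ ω), γ u ω := by
  convert measurable_stoppedValue (isStronglyProgressive_intervalIntegral_zero_max hγ hint) hτ
    using 2 with ω
  simp [stoppedValue, max_eq_left (hτ0 ω)]

end Progressive

section Freezing

variable {Ω β ι : Type*} {m m0 : MeasurableSpace Ω} [MeasurableSpace β] [MeasurableSpace ι]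
  {P : Measure Ω} [IsProbabilityMeasure P] {X : Ω → β} {Z : Ω → ι} {C : Set (β × ι)}

lemma measurable_measure_prodMk_mem (hZ : Measurable Z) (hC : MeasurableSet C) :
    Measurable fun b => P {ω | (b, Z ω) ∈ C} := by
  have h := measurable_measure_prodMk_left (ν := P.map Z) hC
  simp only [Measure.map_apply hZ (measurable_prodMk_left hC)] at h
  exact h

lemma measure_prodMk_mem_inter_of_indep (hm : m ≤ m0) (hX : Measurable[m] X)
    (hZ : Measurable Z)
    (hindep : Indep (MeasurableSpace.comap Z inferInstance) m P) (hC : MeasurableSet C)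
    {s : Set Ω} (hs : MeasurableSet[m] s) :
    P ({ω | (X ω, Z ω) ∈ C} ∩ s) = ∫⁻ ω in s, P {ω' | (X ω, Z ω') ∈ C} ∂P := by
  -- `Y` carries `s` along with `X`, so that independence of `Y` and `Z` handles the restriction
  set Y : Ω → β × Prop := fun ω => (X ω, ω ∈ s)
  have hY : Measurable[m] Y := hX.prodMk (@measurableSet_setOfPred Ω m (· ∈ s) |>.1 hs)
  have hYZ : IndepFun Y Z P :=
    indep_of_indep_of_le_left hindep.symm (measurable_iff_comap_le.1 hY)
  set D : Set ((β × Prop) × ι) := {p | p.1.2 ∧ (p.1.1, p.2) ∈ C}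
  have hD : MeasurableSet D :=
    (measurableSet_setOfPred.2 measurable_fst.snd).inter
      ((measurable_fst.fst.prodMk measurable_snd) hC)
  have hY0 : Measurable Y := hY.mono hm le_rfl
  calc P ({ω | (X ω, Z ω) ∈ C} ∩ s) = P.map (fun ω => (Y ω, Z ω)) D := by
        rw [Measure.map_apply (hY0.prodMk hZ) hD]
        congr 1
        ext ω
        simp [Y, D, and_comm]
    _ = ((P.map Y).prod (P.map Z)) D := by
        rw [(indepFun_iff_map_prod_eq_prod_map_map hY0.aemeasurable hZ.aemeasurable).1 hYZ]
    _ = ∫⁻ ω, P.map Z (Prod.mk (Y ω) ⁻¹' D) ∂P := by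
        rw [Measure.prod_apply hD, lintegral_map (measurable_measure_prodMk_left hD) hY0]
    _ = ∫⁻ ω, s.indicator (fun ω => P {ω' | (X ω, Z ω') ∈ C}) ω ∂P := by
        refine lintegral_congr fun ω => ?_
        rw [Measure.map_apply hZ (measurable_prodMk_left hD)]
        by_cases hω : ω ∈ s <;> simp [Y, D, hω]
    _ = ∫⁻ ω in s, P {ω' | (X ω, Z ω') ∈ C} ∂P := lintegral_indicator (hm s hs) _

lemma condExp_indicator_prodMk_mem_of_indep (hm : m ≤ m0) (hX : Measurable[m] X)
    (hZ : Measurable Z) (hindep : Indep (MeasurableSpace.comap Z inferInstance) m P)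
    (hC : MeasurableSet C) :
    P[{ω | (X ω, Z ω) ∈ C}.indicator fun _ => (1:ℝ) | m]
      =ᵐ[P] fun ω => P.real {ω' | (X ω, Z ω') ∈ C} := by
  have hA : MeasurableSet {ω | (X ω, Z ω) ∈ C} := ((hX.mono hm le_rfl).prodMk hZ) hC
  have hg : Measurable[m] fun ω => P.real {ω' | (X ω, Z ω') ∈ C} :=
    (measurable_measure_prodMk_mem hZ hC).ennreal_toReal.comp hX
  refine (ae_eq_condExp_of_forall_setIntegral_eq hm ((integrable_const 1).indicator hA)
    (fun s _ _ => (Integrable.of_bound (hg.mono hm le_rfl).aestronglyMeasurable 1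
      (ae_of_all _ fun ω => ?_)).integrableOn) (fun s hs _ => ?_) hg.aestronglyMeasurable).symm
  · simp [abs_of_nonneg measureReal_nonneg, measureReal_le_one]
  · rw [setIntegral_indicator hA, setIntegral_const, smul_eq_mul, mul_one,
      Set.inter_comm, measureReal_def,
      measure_prodMk_mem_inter_of_indep hm hX hZ hindep hC hs]
    exact integral_toReal
      ((measurable_measure_prodMk_mem hZ hC).comp (hX.mono hm le_rfl)).aemeasurable
      (ae_of_all _ fun _ => measure_lt_top _ _)

end Freezing

theorem stmt11_general {Ω : Type*} [m0 : MeasurableSpace Ω] (P : Measure Ω) [IsProbabilityMeasure P]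
    (G : Filtration ℝ m0)
    (E : Ω → ℝ) (hEmeas : Measurable E)
    (hExp : ∀ s : ℝ, 0 ≤ s → P {ω | s < E ω} = ENNReal.ofReal (Real.exp (-s)))
    (hIndep : Indep (MeasurableSpace.comap E (inferInstance : MeasurableSpace ℝ))
      (⨆ t : ℝ, (G t : MeasurableSpace Ω)) P)
    (γ : ℝ → Ω → ℝ) (hγ0 : ∀ t ω, 0 ≤ γ t ω)
    (hγprog : ProgMeasurable G γ)
    (hγint : ∀ ω, ∀ t : ℝ, IntervalIntegrable (fun s => γ s ω) volume 0 t)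
    (θ : Ω → ENNReal)
    (hθ : ∀ ω, θ ω =
      sInf (ENNReal.ofReal '' {s : ℝ | 0 ≤ s ∧ ∫ u in (0:ℝ)..s, γ u ω = E ω}))
    (τ : Ω → ℝ) (hτ : IsStoppingTime G (fun ω => (τ ω : WithTop ℝ))) (hτpos : ∀ ω, 0 ≤ τ ω) :
    P[(Set.indicator {ω | ENNReal.ofReal (τ ω) < θ ω} fun _ => (1:ℝ)) |
        hτ.measurableSpace]
      =ᵐ[P] fun ω => Real.exp (-∫ s in (0:ℝ)..(τ ω), γ s ω) := by
  set Γ : Ω → ℝ := fun ω => ∫ u in (0:ℝ)..(τ ω), γ u ω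
  have hΓ0 : ∀ ω, 0 ≤ Γ ω := fun ω =>
    intervalIntegral.integral_nonneg (hτpos ω) fun u _ => hγ0 u ω
  have hE0 : ∀ᵐ ω ∂P, 0 ≤ E ω := by
    have hpos : P {ω | 0 < E ω} = 1 := by simpa using hExp 0 le_rfl
    filter_upwards [(prob_compl_eq_zero_iff (measurableSet_lt measurable_const hEmeas)).2 hpos]
      with ω hω using le_of_lt hω
  have hsurvival : {ω | ENNReal.ofReal (τ ω) < θ ω}.indicator (fun _ => (1:ℝ))
      =ᵐ[P] {ω | Γ ω < E ω}.indicator fun _ => 1 := by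
    filter_upwards [hE0] with ω hω
    simp only [Set.indicator, Set.mem_ofPred_eq, hθ ω,
      ofReal_lt_sInf_hittingTime_iff (hγ0 · ω) (hγint ω) hω (hτpos ω), Γ]
  have hfreeze := condExp_indicator_prodMk_mem_of_indep (C := {p : ℝ × ℝ | p.1 < p.2})
    hτ.measurableSpace_le (measurable_intervalIntegral_stoppingTime hγprog hγint hτ hτpos)
    hEmeas (indep_of_indep_of_le_right hIndep hτ.measurableSpace_le')
    (measurableSet_lt measurable_fst measurable_snd)
  refine (condExp_congr_ae hsurvival).trans (hfreeze.trans (ae_of_all _ fun ω => ?_))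
  simp only [Set.mem_ofPred_eq, measureReal_def, hExp _ (hΓ0 ω),
    ENNReal.toReal_ofReal (Real.exp_pos _).le, Γ]

/-- For a Cox-type default time `θ = inf{t : ∫₀ᵗ γ ds = E}` with `E` a rate-1
exponential random variable independent of the filtration `G` and `γ ≥ 0` progressively
measurable and locally integrable, every finite `G`-stopping time `τ` satisfies
`P[θ > τ | G_τ] = exp (-∫₀^τ γ_s ds)` a.s. -/
theorem stmt11 {Ω : Type*} [m0 : MeasurableSpace Ω] (P : Measure Ω) [IsProbabilityMeasure P]
    (G : Filtration ℝ m0)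
    (hGrc : ∀ t : ℝ, G t = ⨅ s ∈ Set.Ioi t, G s)
    (E : Ω → ℝ) (hEmeas : Measurable E)
    (hExp : ∀ s : ℝ, 0 ≤ s → P {ω | s < E ω} = ENNReal.ofReal (Real.exp (-s)))
    (hIndep : Indep (MeasurableSpace.comap E (inferInstance : MeasurableSpace ℝ))
      (⨆ t : ℝ, (G t : MeasurableSpace Ω)) P)
    (γ : ℝ → Ω → ℝ) (hγ0 : ∀ t ω, 0 ≤ γ t ω)
    (hγprog : ProgMeasurable G γ)
    (hγint : ∀ ω, ∀ t : ℝ, IntervalIntegrable (fun s => γ s ω) volume 0 t)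
    (θ : Ω → ENNReal)
    (hθ : ∀ ω, θ ω =
      sInf (ENNReal.ofReal '' {s : ℝ | 0 ≤ s ∧ ∫ u in (0:ℝ)..s, γ u ω = E ω}))
    (τ : Ω → ℝ) (hτ : IsStoppingTime G (fun ω => (τ ω : WithTop ℝ))) (hτpos : ∀ ω, 0 ≤ τ ω) :
    P[(Set.indicator {ω | ENNReal.ofReal (τ ω) < θ ω} fun _ => (1:ℝ)) |
        hτ.measurableSpace]
      =ᵐ[P] fun ω => Real.exp (-∫ s in (0:ℝ)..(τ ω), γ s ω) :=
  stmt11_general (m0 := m0) P G E hEmeas hExp hIndep γ hγ0 hγprog hγint θ hθ τ hτ hτpos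
end

section
/- Let F be the c.d.f. of the uniform distribution on [r-1, r] (so F(y) = min(max(y - r + 1, 0), 1)), let c ∈ (0,1), and let x ≥ 0. Then the equation 1 - u = F(r - x - c·u) has the unique solution u = min(x/(1-c), 1) in [0,1]. -/
/-!
Both sides of `1 - u = F (r - x - c u)` move with `u`, but the left side has slope `-1`
while `F` is `1`-Lipschitz, so the right side moves at rate at most `c < 1`. Hence
`u ↦ u + F (r - x - c u)` is strictly increasing and the equation has at most one solution;
a direct computation in the two regimes `x ≤ 1 - c` and `x ≥ 1 - c` shows that
`min (x / (1 - c)) 1` is one.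
-/

theorem StrictMono.add_comp_affine_of_lipschitzWith_one {f : ℝ → ℝ} (hf : LipschitzWith 1 f)
    {c : ℝ} (hc : |c| < 1) (a : ℝ) : StrictMono fun u => u + f (a - c * u) := by
  intro u v huv
  have hdist : |f (a - c * u) - f (a - c * v)| < v - u :=
    calc |f (a - c * u) - f (a - c * v)| = dist (f (a - c * u)) (f (a - c * v)) :=
          (Real.dist_eq _ _).symm
      _ ≤ 1 * dist (a - c * u) (a - c * v) := by exact_mod_cast hf.dist_le_mul _ _
      _ = |c| * (v - u) := by
          rw [one_mul, Real.dist_eq, show a - c * u - (a - c * v) = c * (v - u) by ring, abs_mul,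
            abs_of_pos (sub_pos.2 huv)]
      _ < v - u := mul_lt_of_lt_one_left (sub_pos.2 huv) hc
  dsimp only
  linarith [le_abs_self (f (a - c * u) - f (a - c * v))]

theorem lipschitzWith_one_clamp (r : ℝ) :
    LipschitzWith 1 fun y : ℝ => min (max (y - r + 1) 0) 1 := by
  convert ((IsometryEquiv.addRight (1 - r)).isometry.lipschitz.max_const 0).min_const 1 using 4
  show _ = _ + (1 - r)
  ring

theorem one_sub_min_div_eq_clamp {c x : ℝ} (hc : c < 1) (hx : 0 ≤ x) :
    1 - min (x / (1 - c)) 1 = min (max (1 - x - c * min (x / (1 - c)) 1) 0) 1 := by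
  have h1c : 0 < 1 - c := sub_pos.2 hc
  rcases le_total x (1 - c) with hsmall | hlarge
  · have hv : x / (1 - c) ≤ 1 := (div_le_one h1c).2 hsmall
    have hv0 : 0 ≤ x / (1 - c) := div_nonneg hx h1c.le
    have hlin : 1 - x - c * (x / (1 - c)) = 1 - x / (1 - c) := by field_simp; ring
    rw [min_eq_left hv, hlin, max_eq_left (by linarith), min_eq_left (by linarith)]
  · rw [min_eq_right ((one_le_div h1c).2 hlarge), max_eq_right (by linarith),
      min_eq_left zero_le_one, sub_self]

/-- Additive model with common noise: for `F` the c.d.f. of the uniform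
distribution on `[r-1, r]`, `c ∈ (0,1)` and `x ≥ 0`, the equation `1 - u = F (r - x - c·u)`
has the unique solution `u = min (x / (1-c)) 1` in `[0,1]`. -/
theorem stmt18 (r : ℝ) (F : ℝ → ℝ) (hF : ∀ y, F y = min (max (y - r + 1) 0) 1)
    (c : ℝ) (hc : c ∈ Set.Ioo (0:ℝ) 1) (x : ℝ) (hx : 0 ≤ x) :
    ∀ u ∈ Set.Icc (0:ℝ) 1, (1 - u = F (r - x - c * u) ↔ u = min (x / (1 - c)) 1) := by
  obtain ⟨hc0, hc1⟩ := hc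
  have hF_lip : LipschitzWith 1 F := by
    simpa only [← funext hF] using lipschitzWith_one_clamp r
  have hinj := (StrictMono.add_comp_affine_of_lipschitzWith_one hF_lip
    (abs_lt.2 ⟨by linarith, hc1⟩) (r - x)).injective
  set v := min (x / (1 - c)) 1
  have hv : 1 - v = F (r - x - c * v) := by
    rw [hF, show r - x - c * v - r + 1 = 1 - x - c * v by ring]
    exact one_sub_min_div_eq_clamp hc1 hx
  intro u _
  constructor
  · intro hu
    exact hinj (show u + F (r - x - c * u) = v + F (r - x - c * v) by linarith)
  · rintro rfl
    exact hv
end
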